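/- arXiv:1204.1832 — 3 statements merged into one kernel-verified Lean document; each statement's English description precedes it below -/
import Mathlib

section
/- Let p and p̂ be probability mass functions on {0,1,...,k} with |p̂(i) - p(i)| ≤ ε·p(i) for all i. Let E = Σᵢ i·p(i), ΔE = Σᵢ i·p̂(i) - E, and Var = Σᵢ (i - E)²·p(i). Then (ΔE)² ≤ ε²·Var. -/
/-!
Since both mass functions have total mass one, `ΔE = ∑ᵢ (i - E) (p̂ᵢ - pᵢ)` for the centred
weights `i - E`. Each term is at most `|i - E| · ε pᵢ` in absolute value, so Cauchy–Schwarz with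
the weights `pᵢ` gives `ΔE² ≤ ε² (∑ᵢ (i - E)² pᵢ) (∑ᵢ pᵢ) = ε² Var`.
-/

open Finset

namespace Finset

variable {ι R : Type*}

theorem sum_sub_mul_sub_of_sum_eq [CommRing R] (s : Finset ι) (x q p : ι → R) (c : R)
    (h : ∑ i ∈ s, q i = ∑ i ∈ s, p i) :
    ∑ i ∈ s, (x i - c) * (q i - p i) = ∑ i ∈ s, x i * q i - ∑ i ∈ s, x i * p i := by
  simp only [sub_mul, mul_sub, sum_sub_distrib, ← mul_sum, h]
  ring

theorem sq_sum_mul_le_of_abs_le_mul [CommRing R] [LinearOrder R] [IsStrictOrderedRing R]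
    (s : Finset ι) {ε : R} {y d p : ι → R} (hp : ∀ i ∈ s, 0 ≤ p i)
    (hd : ∀ i ∈ s, |d i| ≤ ε * p i) :
    (∑ i ∈ s, y i * d i) ^ 2 ≤ ε ^ 2 * (∑ i ∈ s, y i ^ 2 * p i) * ∑ i ∈ s, p i := by
  rw [mul_sum s (fun i => y i ^ 2 * p i)]
  refine sum_sq_le_sum_mul_sum_of_sq_le_mul s
    (fun i hi => mul_nonneg (sq_nonneg ε) (mul_nonneg (sq_nonneg (y i)) (hp i hi))) hp
    fun i hi => ?_
  have hd_sq : d i ^ 2 ≤ (ε * p i) ^ 2 := sq_le_sq.mpr ((hd i hi).trans (le_abs_self _))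
  calc (y i * d i) ^ 2 = y i ^ 2 * d i ^ 2 := mul_pow _ _ _
    _ ≤ y i ^ 2 * (ε * p i) ^ 2 := mul_le_mul_of_nonneg_left hd_sq (sq_nonneg _)
    _ = ε ^ 2 * (y i ^ 2 * p i) * p i := by ring

end Finset

theorem delta_expectation_sq_bound_loose_general (k : ℕ) (ε : ℝ) (p phat : ℕ → ℝ)
    (hp : ∀ i ∈ range (k + 1), 0 ≤ p i)
    (hsum : ∑ i ∈ range (k + 1), p i = 1)
    (hsumhat : ∑ i ∈ range (k + 1), phat i = 1)
    (hbound : ∀ i ∈ range (k + 1), |phat i - p i| ≤ ε * p i) :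
    ((∑ i ∈ range (k + 1), (i : ℝ) * phat i) - ∑ i ∈ range (k + 1), (i : ℝ) * p i) ^ 2
      ≤ ε ^ 2 *
        ∑ i ∈ range (k + 1), ((i : ℝ) - ∑ j ∈ range (k + 1), (j : ℝ) * p j) ^ 2 * p i := by
  set E : ℝ := ∑ j ∈ range (k + 1), (j : ℝ) * p j
  rw [← sum_sub_mul_sub_of_sum_eq _ (fun i : ℕ => (i : ℝ)) phat p E (hsumhat.trans hsum.symm)]
  simpa only [hsum, mul_one] using sq_sum_mul_le_of_abs_le_mul _ hp hbound

theorem delta_expectation_sq_bound_loose (k : ℕ) (ε : ℝ) (hε : 0 ≤ ε) (p phat : ℕ → ℝ)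
    (hp : ∀ i ∈ range (k + 1), 0 ≤ p i) (hphat : ∀ i ∈ range (k + 1), 0 ≤ phat i)
    (hsum : ∑ i ∈ range (k + 1), p i = 1)
    (hsumhat : ∑ i ∈ range (k + 1), phat i = 1)
    (hbound : ∀ i ∈ range (k + 1), |phat i - p i| ≤ ε * p i) :
    ((∑ i ∈ range (k + 1), (i : ℝ) * phat i) - ∑ i ∈ range (k + 1), (i : ℝ) * p i) ^ 2
      ≤ ε ^ 2 *
        ∑ i ∈ range (k + 1), ((i : ℝ) - ∑ j ∈ range (k + 1), (j : ℝ) * p j) ^ 2 * p i :=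
  delta_expectation_sq_bound_loose_general k ε p phat hp hsum hsumhat hbound
end

section
/- Let p and p̂ be probability mass functions on {0,1,...,k} with |p̂(i) - p(i)| ≤ ε·p(i) for all i. Let E, Ê be the respective means and Var, V̂ar the respective variances (V̂ar = Σᵢ (i - Ê)²·p̂(i)). Then |V̂ar - Var| ≤ ε·(1 + ε)·Var. -/
/-!
Centring both variances at the mean `E` of `p` (Steiner's formula) gives
`V̂ar - Var = ∑ (i - E)² (p̂ i - p i) - (Ê - E)²`. The first term is at most `ε Var` in absolute
value. For the second, `Ê - E = ∑ (i - E) (p̂ i - p i)` is at most `ε ∑ |i - E| p i`, whose square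
is at most `ε² Var` by Cauchy–Schwarz.
-/

open Finset

section WeightedMoments

variable {ι : Type*} (s : Finset ι) (w x : ι → ℝ)

def weightedMean : ℝ := ∑ i ∈ s, x i * w i

def weightedVariance : ℝ := ∑ i ∈ s, (x i - weightedMean s w x) ^ 2 * w i

variable {s w}

theorem weightedVariance_eq_sum_sub_sq_mul_sub_sq (hw : ∑ i ∈ s, w i = 1) (c : ℝ) :
    weightedVariance s w x =
      ∑ i ∈ s, (x i - c) ^ 2 * w i - (weightedMean s w x - c) ^ 2 := by
  set m := weightedMean s w x
  have hcentred : ∑ i ∈ s, (x i - c) * w i = m - c := by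
    simp only [sub_mul, sum_sub_distrib, ← mul_sum, hw, mul_one, m, weightedMean]
  calc weightedVariance s w x
      = ∑ i ∈ s, ((x i - c) ^ 2 * w i - 2 * (m - c) * ((x i - c) * w i) + (m - c) ^ 2 * w i) :=
        sum_congr rfl fun i _ => by ring
    _ = ∑ i ∈ s, (x i - c) ^ 2 * w i - (m - c) ^ 2 := by
        rw [sum_add_distrib, sum_sub_distrib, ← mul_sum, ← mul_sum, hcentred, hw]
        ring

theorem weightedMean_sub_weightedMean {p q : ι → ℝ} (hpq : ∑ i ∈ s, q i = ∑ i ∈ s, p i)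
    (c : ℝ) :
    weightedMean s q x - weightedMean s p x = ∑ i ∈ s, (x i - c) * (q i - p i) := by
  simp only [weightedMean, mul_sub, sub_mul, sum_sub_distrib, ← mul_sum, hpq]
  ring

theorem sq_sum_abs_mul_le_sum_sq_mul (y : ι → ℝ) (hw : ∀ i ∈ s, 0 ≤ w i)
    (hw1 : ∑ i ∈ s, w i = 1) :
    (∑ i ∈ s, |y i| * w i) ^ 2 ≤ ∑ i ∈ s, y i ^ 2 * w i := by
  simpa only [hw1, mul_one] using sum_sq_le_sum_mul_sum_of_sq_le_mul s
    (fun i hi => mul_nonneg (sq_nonneg (y i)) (hw i hi)) hw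
    (fun i _ => le_of_eq (by rw [mul_pow, sq_abs]; ring))

end WeightedMoments

section Perturbation

variable {ι : Type*} {s : Finset ι} {p q : ι → ℝ} {ε : ℝ}

theorem abs_sum_mul_sub_le (hpq : ∀ i ∈ s, |q i - p i| ≤ ε * p i) (f : ι → ℝ) :
    |∑ i ∈ s, f i * (q i - p i)| ≤ ε * ∑ i ∈ s, |f i| * p i := calc
  |∑ i ∈ s, f i * (q i - p i)| ≤ ∑ i ∈ s, |f i| * |q i - p i| := by
      simpa only [abs_mul] using abs_sum_le_sum_abs (fun i => f i * (q i - p i)) s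
  _ ≤ ∑ i ∈ s, |f i| * (ε * p i) :=
      sum_le_sum fun i hi => mul_le_mul_of_nonneg_left (hpq i hi) (abs_nonneg _)
  _ = ε * ∑ i ∈ s, |f i| * p i := by
      rw [mul_sum]
      exact sum_congr rfl fun i _ => by ring

theorem sq_weightedMean_sub_le (x : ι → ℝ) (hp : ∀ i ∈ s, 0 ≤ p i) (hp1 : ∑ i ∈ s, p i = 1)
    (hq1 : ∑ i ∈ s, q i = 1) (hpq : ∀ i ∈ s, |q i - p i| ≤ ε * p i) :
    (weightedMean s q x - weightedMean s p x) ^ 2 ≤ ε ^ 2 * weightedVariance s p x := by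
  set E := weightedMean s p x
  have hdiff : |weightedMean s q x - E| ≤ ε * ∑ i ∈ s, |x i - E| * p i := by
    rw [weightedMean_sub_weightedMean x (hq1.trans hp1.symm) E]
    exact abs_sum_mul_sub_le hpq _
  calc (weightedMean s q x - E) ^ 2 = |weightedMean s q x - E| ^ 2 := (sq_abs _).symm
    _ ≤ (ε * ∑ i ∈ s, |x i - E| * p i) ^ 2 := pow_le_pow_left₀ (abs_nonneg _) hdiff 2
    _ = ε ^ 2 * (∑ i ∈ s, |x i - E| * p i) ^ 2 := mul_pow _ _ 2
    _ ≤ ε ^ 2 * weightedVariance s p x :=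
        mul_le_mul_of_nonneg_left (sq_sum_abs_mul_le_sum_sq_mul _ hp hp1) (sq_nonneg ε)

theorem abs_weightedVariance_sub_le (x : ι → ℝ) (hp : ∀ i ∈ s, 0 ≤ p i)
    (hp1 : ∑ i ∈ s, p i = 1) (hq1 : ∑ i ∈ s, q i = 1) (hpq : ∀ i ∈ s, |q i - p i| ≤ ε * p i) :
    |weightedVariance s q x - weightedVariance s p x| ≤
      ε * (1 + ε) * weightedVariance s p x := by
  set E := weightedMean s p x with hE
  have hsplit : weightedVariance s q x - weightedVariance s p x =
      ∑ i ∈ s, (x i - E) ^ 2 * (q i - p i) - (weightedMean s q x - E) ^ 2 := by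
    rw [weightedVariance_eq_sum_sub_sq_mul_sub_sq x hq1 E]
    simp only [weightedVariance, ← hE, mul_sub, sum_sub_distrib]
    ring
  have hcentred : |∑ i ∈ s, (x i - E) ^ 2 * (q i - p i)| ≤ ε * weightedVariance s p x := by
    have hbound := abs_sum_mul_sub_le hpq fun i => (x i - E) ^ 2
    simp_rw [abs_pow, sq_abs] at hbound
    exact hbound
  have hmean := sq_weightedMean_sub_le x hp hp1 hq1 hpq
  calc |weightedVariance s q x - weightedVariance s p x|
      ≤ |∑ i ∈ s, (x i - E) ^ 2 * (q i - p i)| + |(weightedMean s q x - E) ^ 2| :=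
        hsplit ▸ abs_sub _ _
    _ ≤ ε * weightedVariance s p x + ε ^ 2 * weightedVariance s p x :=
        add_le_add hcentred ((abs_sq _).trans_le hmean)
    _ = ε * (1 + ε) * weightedVariance s p x := by ring

end Perturbation

theorem variance_error_bound_loose_general (k : ℕ) (ε : ℝ) (p phat : ℕ → ℝ)
    (hp : ∀ i ∈ range (k + 1), 0 ≤ p i)
    (hsum : ∑ i ∈ range (k + 1), p i = 1)
    (hsumhat : ∑ i ∈ range (k + 1), phat i = 1)
    (hbound : ∀ i ∈ range (k + 1), |phat i - p i| ≤ ε * p i) :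
    |(∑ i ∈ range (k + 1), ((i : ℝ) - ∑ j ∈ range (k + 1), (j : ℝ) * phat j) ^ 2 * phat i)
        - ∑ i ∈ range (k + 1), ((i : ℝ) - ∑ j ∈ range (k + 1), (j : ℝ) * p j) ^ 2 * p i|
      ≤ ε * (1 + ε) *
        ∑ i ∈ range (k + 1), ((i : ℝ) - ∑ j ∈ range (k + 1), (j : ℝ) * p j) ^ 2 * p i :=
  abs_weightedVariance_sub_le (fun i : ℕ => (i : ℝ)) hp hsum hsumhat hbound

theorem variance_error_bound_loose (k : ℕ) (ε : ℝ) (hε : 0 ≤ ε) (p phat : ℕ → ℝ)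
    (hp : ∀ i ∈ range (k + 1), 0 ≤ p i) (hphat : ∀ i ∈ range (k + 1), 0 ≤ phat i)
    (hsum : ∑ i ∈ range (k + 1), p i = 1)
    (hsumhat : ∑ i ∈ range (k + 1), phat i = 1)
    (hbound : ∀ i ∈ range (k + 1), |phat i - p i| ≤ ε * p i) :
    |(∑ i ∈ range (k + 1), ((i : ℝ) - ∑ j ∈ range (k + 1), (j : ℝ) * phat j) ^ 2 * phat i)
        - ∑ i ∈ range (k + 1), ((i : ℝ) - ∑ j ∈ range (k + 1), (j : ℝ) * p j) ^ 2 * p i|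
      ≤ ε * (1 + ε) *
        ∑ i ∈ range (k + 1), ((i : ℝ) - ∑ j ∈ range (k + 1), (j : ℝ) * p j) ^ 2 * p i :=
  variance_error_bound_loose_general k ε p phat hp hsum hsumhat hbound
end

section
/- Let p and p̂ be probability mass functions on {0,1,...,k} with |p̂(i) - p(i)| ≤ ε·√(p(i)) for all i. Then the means satisfy |Ê - E| ≤ ε·√(k(k+1)·E / 2), where E = Σᵢ i·p(i) and Ê = Σᵢ i·p̂(i). -/
/-! Since `|p̂ i - p i| ≤ ε √(p i)`, the error of the mean is at most `ε ∑ i √(p i)`, and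
Cauchy–Schwarz with the splitting `i √(p i) = √i · √(i p i)` bounds that sum by
`√((∑ i) (∑ i p i)) = √(k (k + 1) E / 2)`. -/

open Finset

namespace Finset

variable {ι : Type*} (s : Finset ι)

theorem abs_sum_mul_sub_sum_mul_le {w p q b : ι → ℝ} (hw : ∀ i ∈ s, 0 ≤ w i)
    (hqp : ∀ i ∈ s, |q i - p i| ≤ b i) :
    |∑ i ∈ s, w i * q i - ∑ i ∈ s, w i * p i| ≤ ∑ i ∈ s, w i * b i :=
  calc |∑ i ∈ s, w i * q i - ∑ i ∈ s, w i * p i|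
      = |∑ i ∈ s, w i * (q i - p i)| := by simp only [mul_sub, sum_sub_distrib]
    _ ≤ ∑ i ∈ s, |w i * (q i - p i)| := abs_sum_le_sum_abs _ _
    _ ≤ ∑ i ∈ s, w i * b i := sum_le_sum fun i hi => by
        rw [abs_mul, abs_of_nonneg (hw i hi)]
        exact mul_le_mul_of_nonneg_left (hqp i hi) (hw i hi)

theorem sum_mul_sqrt_le_sqrt_sum_mul_sum_mul {w p : ι → ℝ} (hw : ∀ i ∈ s, 0 ≤ w i)
    (hp : ∀ i ∈ s, 0 ≤ p i) :
    ∑ i ∈ s, w i * √(p i) ≤ √((∑ i ∈ s, w i) * ∑ i ∈ s, w i * p i) := by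
  refine le_trans (le_abs_self _) (Real.abs_le_sqrt ?_)
  refine sum_sq_le_sum_mul_sum_of_sq_le_mul s hw (fun i hi => mul_nonneg (hw i hi) (hp i hi))
    fun i hi => le_of_eq ?_
  rw [mul_pow, Real.sq_sqrt (hp i hi)]
  ring

theorem sum_range_succ_natCast_id (k : ℕ) :
    ∑ i ∈ range (k + 1), (i : ℝ) = k * (k + 1) / 2 := by
  have h := congrArg (Nat.cast : ℕ → ℝ) (sum_range_id_mul_two (k + 1))
  push_cast at h
  linarith

end Finset

theorem expectation_error_bound_sqrt_general (k : ℕ) (ε : ℝ) (hε : 0 ≤ ε) (p phat : ℕ → ℝ)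
    (hp : ∀ i ∈ range (k + 1), 0 ≤ p i)
    (hbound : ∀ i ∈ range (k + 1), |phat i - p i| ≤ ε * Real.sqrt (p i)) :
    |(∑ i ∈ range (k + 1), (i : ℝ) * phat i) - ∑ i ∈ range (k + 1), (i : ℝ) * p i|
      ≤ ε * Real.sqrt ((k : ℝ) * (k + 1) * (∑ i ∈ range (k + 1), (i : ℝ) * p i) / 2) := by
  have hw : ∀ i ∈ range (k + 1), (0 : ℝ) ≤ i := fun i _ => i.cast_nonneg
  calc _ ≤ ∑ i ∈ range (k + 1), (i : ℝ) * (ε * √(p i)) :=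
        abs_sum_mul_sub_sum_mul_le _ hw hbound
    _ = ε * ∑ i ∈ range (k + 1), (i : ℝ) * √(p i) := by
        rw [mul_sum]; exact sum_congr rfl fun i _ => mul_left_comm _ _ _
    _ ≤ ε * √((∑ i ∈ range (k + 1), (i : ℝ)) * ∑ i ∈ range (k + 1), (i : ℝ) * p i) :=
        mul_le_mul_of_nonneg_left (sum_mul_sqrt_le_sqrt_sum_mul_sum_mul _ hw hp) hε
    _ = _ := by rw [sum_range_succ_natCast_id]; ring_nf

theorem expectation_error_bound_sqrt (k : ℕ) (ε : ℝ) (hε : 0 ≤ ε) (p phat : ℕ → ℝ)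
    (hp : ∀ i ∈ range (k + 1), 0 ≤ p i) (hphat : ∀ i ∈ range (k + 1), 0 ≤ phat i)
    (hsum : ∑ i ∈ range (k + 1), p i = 1)
    (hsumhat : ∑ i ∈ range (k + 1), phat i = 1)
    (hbound : ∀ i ∈ range (k + 1), |phat i - p i| ≤ ε * Real.sqrt (p i)) :
    |(∑ i ∈ range (k + 1), (i : ℝ) * phat i) - ∑ i ∈ range (k + 1), (i : ℝ) * p i|
      ≤ ε * Real.sqrt ((k : ℝ) * (k + 1) * (∑ i ∈ range (k + 1), (i : ℝ) * p i) / 2) :=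
  expectation_error_bound_sqrt_general k ε hε p phat hp hbound
end
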